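/- Suppose (S,R) is a semigroup presentation complete with respect to right-reversing, and R contains no relation of the form s·v = s·v' with s ∈ S and v ≠ v'. Then the monoid presented by (S,R) is left-cancellative. -/
import Mathlib


/-- A congruence on the free monoid of words over `S`: an equivalence relation
compatible with concatenation. -/
def IsCong {S : Type} (r : List S → List S → Prop) : Prop :=
  Equivalence r ∧ ∀ a b c d : List S, r a b → r c d → r (a ++ c) (b ++ d)

/-- `R`-equivalence: the smallest congruence on the free monoid `S*`
containing the relations `R`. -/
def REquiv {S : Type} (R : List S → List S → Prop) (w w' : List S) : Prop :=
  ∀ r : List S → List S → Prop, IsCong r → (∀ a b, R a b → r a b) → r w w'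

/-- The positive word `w` viewed as a signed word. -/
def wpos {S : Type} (w : List S) : List (S ⊕ S) := w.map Sum.inl

/-- The formal inverse `w⁻¹` of a positive word `w`, as a signed word. -/
def wneg {S : Type} (w : List S) : List (S ⊕ S) := (w.map Sum.inr).reverse

/-- One step of right-reversing with respect to `R`: replace a subword `s⁻¹t`
by `v'·v⁻¹` where `s·v' = t·v` is a relation of `R` (in either orientation),
including the trivial step `s⁻¹s ↷ ε`. -/
def RevStep {S : Type} (R : List S → List S → Prop) (x y : List (S ⊕ S)) : Prop :=
  ∃ (u u' : List (S ⊕ S)) (s t : S) (v v' : List S),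
    x = u ++ [Sum.inr s, Sum.inl t] ++ u' ∧
    y = u ++ wpos v' ++ wneg v ++ u' ∧
    (R (s :: v') (t :: v) ∨ R (t :: v) (s :: v') ∨ (s = t ∧ v = [] ∧ v' = []))

/-- Right-reversing: finitely many reversing steps. -/
def Rev {S : Type} (R : List S → List S → Prop) :
    List (S ⊕ S) → List (S ⊕ S) → Prop :=
  Relation.ReflTransGen (RevStep R)

/-- Completeness of a presentation with respect to right-reversing. -/
def Complete {S : Type} (R : List S → List S → Prop) : Prop :=
  ∀ w w' : List S, REquiv R w w' → Rev R (wneg w ++ wpos w') []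


section Aux
variable {S : Type} (R : List S → List S → Prop)

theorem requiv_refl (w : List S) : REquiv R w w := fun _ hc _ => hc.1.refl w

theorem requiv_symm {w w' : List S} (h : REquiv R w w') : REquiv R w' w :=
  fun r hc hr => hc.1.symm (h r hc hr)

theorem requiv_trans {a b c : List S} (h1 : REquiv R a b) (h2 : REquiv R b c) :
    REquiv R a c := fun r hc hr => hc.1.trans (h1 r hc hr) (h2 r hc hr)

theorem requiv_append {a b c d : List S} (h1 : REquiv R a b) (h2 : REquiv R c d) :
    REquiv R (a ++ c) (b ++ d) := fun r hc hr => hc.2 _ _ _ _ (h1 r hc hr) (h2 r hc hr)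

theorem requiv_of_R {a b : List S} (h : R a b) : REquiv R a b := fun _ _ hr => hr _ _ h

def Den : List (S ⊕ S) → List S → List S → Prop
  | [], p, r => REquiv R p r
  | (Sum.inl s) :: x, p, r => Den x (p ++ [s]) r
  | (Sum.inr s) :: x, p, r => ∃ q, REquiv R (q ++ [s]) p ∧ Den x q r

theorem den_left_invar : ∀ (x : List (S ⊕ S)) {p p' r : List S},
    REquiv R p p' → Den R x p r → Den R x p' r := by
  intro x
  induction x with
  | nil => intro p p' r h hd; exact requiv_trans R (requiv_symm R h) hd
  | cons a x ih =>
    intro p p' r h hd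
    cases a with
    | inl s => exact ih (requiv_append R h (requiv_refl R [s])) hd
    | inr s =>
      obtain ⟨q, hq, hd⟩ := hd
      exact ⟨q, requiv_trans R hq h, hd⟩

theorem den_append : ∀ (a b : List (S ⊕ S)) (p r : List S),
    Den R (a ++ b) p r ↔ ∃ m, Den R a p m ∧ Den R b m r := by
  intro a
  induction a with
  | nil =>
    intro b p r
    constructor
    · intro h; exact ⟨p, requiv_refl R p, h⟩
    · rintro ⟨m, hm, hb⟩; exact den_left_invar R b (requiv_symm R hm) hb
  | cons c a ih =>
    intro b p r
    cases c with
    | inl s => exact ih b (p ++ [s]) r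
    | inr s =>
      constructor
      · rintro ⟨q, hq, hd⟩
        obtain ⟨m, hm, hb⟩ := (ih b q r).1 hd
        exact ⟨m, ⟨q, hq, hm⟩, hb⟩
      · rintro ⟨m, ⟨q, hq, hm⟩, hb⟩
        exact ⟨q, hq, (ih b q r).2 ⟨m, hm, hb⟩⟩

theorem den_wpos : ∀ (v p r : List S), Den R (wpos v) p r ↔ REquiv R (p ++ v) r := by
  intro v
  induction v with
  | nil => intro p r; simp [wpos, Den]
  | cons s v ih =>
    intro p r
    show Den R (Sum.inl s :: wpos v) p r ↔ _
    rw [show Den R (Sum.inl s :: wpos v) p r = Den R (wpos v) (p ++ [s]) r from rfl,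
      ih (p ++ [s]) r]
    constructor
    · intro h; simpa using h
    · intro h; simpa using h

theorem den_wneg : ∀ (v p r : List S), Den R (wneg v) p r ↔ REquiv R p (r ++ v) := by
  intro v
  induction v with
  | nil => intro p r; simp [wneg, Den]
  | cons s v ih =>
    intro p r
    have hw : wneg (s :: v) = wneg v ++ [Sum.inr s] := by simp [wneg]
    rw [hw, den_append]
    constructor
    · rintro ⟨m, hm, q, hq, hqr⟩
      have h1 : REquiv R p (m ++ v) := (ih p m).1 hm
      have h2 : REquiv R (m ++ v) ((q ++ [s]) ++ v) :=
        requiv_append R (requiv_symm R hq) (requiv_refl R v)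
      have h3 : REquiv R ((q ++ [s]) ++ v) ((r ++ [s]) ++ v) :=
        requiv_append R (requiv_append R hqr (requiv_refl R [s])) (requiv_refl R v)
      have : REquiv R p ((r ++ [s]) ++ v) := requiv_trans R (requiv_trans R h1 h2) h3
      simpa using this
    · intro h
      refine ⟨r ++ [s], (ih p (r ++ [s])).2 (by simpa using h), r, requiv_refl R _,
        requiv_refl R r⟩

theorem den_step {x y : List (S ⊕ S)} (hs : RevStep R x y) :
    ∀ p r, Den R x p r → Den R y p r := by
  obtain ⟨u, u', s, t, v, v', hx, hy, hrel⟩ := hs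
  intro p r hd
  subst hx hy
  have hst : REquiv R (s :: v') (t :: v) := by
    rcases hrel with h | h | ⟨h1, h2, h3⟩
    · exact requiv_of_R R h
    · exact requiv_symm R (requiv_of_R R h)
    · subst h1 h2 h3; exact requiv_refl R _
  rw [List.append_assoc, den_append] at hd
  obtain ⟨m1, hu, hd⟩ := hd
  rw [show ([Sum.inr s, Sum.inl t] : List (S ⊕ S)) ++ u' =
    Sum.inr s :: Sum.inl t :: u' from rfl] at hd
  obtain ⟨q, hq, hd⟩ := hd
  rw [show Den R (Sum.inl t :: u') q r = Den R u' (q ++ [t]) r from rfl] at hd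
  -- reassemble
  rw [show u ++ wpos v' ++ wneg v ++ u' = u ++ (wpos v' ++ (wneg v ++ u')) by
    simp [List.append_assoc]]
  rw [den_append]
  refine ⟨m1, hu, ?_⟩
  rw [den_append]
  refine ⟨q ++ [t] ++ v, ?_, ?_⟩
  · rw [den_wpos]
    -- m1 ++ v' ≡ q ++ [t] ++ v
    have h1 : REquiv R (m1 ++ v') ((q ++ [s]) ++ v') :=
      requiv_append R (requiv_symm R hq) (requiv_refl R v')
    have h2 : REquiv R ((q ++ [s]) ++ v') ((q ++ [t]) ++ v) := by
      have := requiv_append R (requiv_refl R q) hst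
      simpa [List.append_assoc] using this
    exact requiv_trans R h1 h2
  · rw [den_append]
    exact ⟨q ++ [t], (den_wneg R v _ _).2 (requiv_refl R _), hd⟩

theorem den_rev {x y : List (S ⊕ S)} (h : Rev R x y) :
    ∀ p r, Den R x p r → Den R y p r := by
  induction h with
  | refl => intro p r h; exact h
  | tail _ hstep ih => intro p r hd; exact den_step R hstep p r (ih p r hd)

theorem pos_unique {N P u u' : List (S ⊕ S)} {s t s' t' : S}
    (hN : ∀ a ∈ N, ∃ c, a = Sum.inr c) (hP : ∀ a ∈ P, ∃ c, a = Sum.inl c)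
    (h : N ++ Sum.inr s :: Sum.inl t :: P = u ++ Sum.inr s' :: Sum.inl t' :: u') :
    u = N ∧ s' = s ∧ t' = t ∧ u' = P := by
  induction N generalizing u with
  | nil =>
    cases u with
    | nil => simp at h; obtain ⟨h1, h2, h3⟩ := h; exact ⟨rfl, h1.symm, h2.symm, h3.symm⟩
    | cons a u2 =>
      simp at h
      obtain ⟨ha, h⟩ := h
      -- h : Sum.inl t :: P = u2 ++ Sum.inr s' :: Sum.inl t' :: u'
      exfalso
      have hmem : Sum.inr s' ∈ Sum.inl t :: P := by
        rw [h]; simp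
      rcases List.mem_cons.mp hmem with h' | h'
      · exact absurd h' (by simp)
      · obtain ⟨c, hc⟩ := hP _ h'; exact absurd hc (by simp)
  | cons n N' ih =>
    cases u with
    | nil =>
      simp at h
      obtain ⟨hn, h⟩ := h
      exfalso
      cases N' with
      | nil => simp at h
      | cons n2 N2 =>
        simp at h
        obtain ⟨c, hc⟩ := hN n2 (by simp)
        rw [hc] at h
        simp at h
    | cons a u2 =>
      simp at h
      obtain ⟨hna, h⟩ := h
      have := ih (fun a ha => hN a (by simp [ha])) h
      obtain ⟨h1, h2, h3, h4⟩ := this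
      exact ⟨by simp [h1, hna], h2, h3, h4⟩

theorem cancel_one (hc : Complete R)
    (hno : ∀ (s : S) (v v' : List S), R (s :: v) (s :: v') → v = v')
    (s : S) (a b : List S) (h : REquiv R (s :: a) (s :: b)) : REquiv R a b := by
  have hrev := hc _ _ h
  have hX : wneg (s :: a) ++ wpos (s :: b) =
      wneg a ++ Sum.inr s :: Sum.inl s :: wpos b := by
    simp [wneg, wpos]
  rw [hX] at hrev
  rcases (Relation.ReflTransGen.cases_head hrev) with heq | ⟨y, hstep, hrest⟩
  · exfalso; simp at heq
  obtain ⟨u, u', s1, t, v, v', hx, hy, hrel⟩ := hstep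
  rw [List.append_assoc] at hx
  rw [show ([Sum.inr s1, Sum.inl t] : List (S ⊕ S)) ++ u' =
    Sum.inr s1 :: Sum.inl t :: u' from rfl] at hx
  have hNa : ∀ x ∈ wneg a, ∃ c, x = Sum.inr c := by
    intro x hx'
    simp [wneg] at hx'
    obtain ⟨c, _, hc⟩ := hx'
    exact ⟨c, hc.symm⟩
  have hPb : ∀ x ∈ wpos b, ∃ c, x = Sum.inl c := by
    intro x hx'
    simp [wpos] at hx'
    obtain ⟨c, _, hc⟩ := hx'
    exact ⟨c, hc.symm⟩
  obtain ⟨hu, hs1, ht, hu'⟩ := pos_unique hNa hPb hx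
  rw [hs1, ht] at hrel
  -- now get v = v'
  have hvv : v = v' := by
    rcases hrel with hr | hr | ⟨_, h2, h3⟩
    · exact (hno s v' v hr).symm
    · exact hno s v v' hr
    · rw [h2, h3]
  have hy2 : y = wneg a ++ wpos v' ++ wneg v' ++ wpos b := by
    rw [hy, hu, hu', hvv]
  -- Den R y a b
  have hden : Den R (wneg a ++ wpos v' ++ wneg v' ++ wpos b) a b := by
    rw [show wneg a ++ wpos v' ++ wneg v' ++ wpos b =
      wneg a ++ (wpos v' ++ (wneg v' ++ wpos b)) by simp [List.append_assoc]]
    rw [den_append]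
    refine ⟨[], (den_wneg R a a []).2 (by simpa using requiv_refl R a), ?_⟩
    rw [den_append]
    refine ⟨v', (den_wpos R v' [] v').2 (by simpa using requiv_refl R v'), ?_⟩
    rw [den_append]
    exact ⟨[], (den_wneg R v' v' []).2 (by simpa using requiv_refl R v'),
      (den_wpos R b [] b).2 (by simpa using requiv_refl R b)⟩
  rw [← hy2] at hden
  exact den_rev R hrest a b hden

end Aux

/-- If `(S,R)` is complete and `R` contains no relation `s·v = s·v'` with
`v ≠ v'`, then the presented monoid is left-cancellative. -/
theorem stmt5 {S : Type} (R : List S → List S → Prop) (hc : Complete R)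
    (hno : ∀ (s : S) (v v' : List S), R (s :: v) (s :: v') → v = v') :
    ∀ x y z : List S, REquiv R (x ++ y) (x ++ z) → REquiv R y z := by
  intro x
  induction x with
  | nil => intro y z h; simpa using h
  | cons s x' ih =>
    intro y z h
    simp only [List.cons_append] at h
    exact ih y z (cancel_one R hc hno s (x' ++ y) (x' ++ z) h)
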